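/- arXiv:1808.03023 — 3 statements merged into one kernel-verified Lean document; each statement's English description precedes it below -/
import Mathlib

section
/- If two virtual 1-knot diagrams α and β are rotational welded equivalent, then α and β have the same parity of the number of virtual crossing points. -/
/-- An abstract theory of virtual 1-knot diagrams: a type of diagrams equipped with the
number of virtual crossings, the number of classical crossings, the Whitney degree, and
the local moves of (rotational) welded theory, each subject to its effect on these
quantities (planar isotopy and Reidemeister moves II, III, the mixed move and the
forbidden (welded) move preserve them; classical Reidemeister I changes the classical
crossing number by ±1 and the Whitney degree by ±1; virtual Reidemeister I changes the
virtual crossing number by ±1 and the Whitney degree by ±1; Reidemeister II moves change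
the corresponding crossing count by ±2). -/
structure VirtualDiagramMoves (D : Type*) where
  /-- number of virtual crossing points -/
  vcross : D → ℕ
  /-- number of classical crossing points -/
  ccross : D → ℕ
  /-- Whitney degree (rotation number) of the underlying curve -/
  whitney : D → ℤ
  /-- planar isotopy -/
  isotopy : D → D → Prop
  /-- classical Reidemeister I move -/
  r1 : D → D → Prop
  /-- classical Reidemeister II move -/
  r2 : D → D → Prop
  /-- classical Reidemeister III move -/
  r3 : D → D → Prop
  /-- virtual Reidemeister I move -/
  vr1 : D → D → Prop
  /-- virtual Reidemeister II move -/
  vr2 : D → D → Prop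
  /-- virtual Reidemeister III move -/
  vr3 : D → D → Prop
  /-- mixed move (virtual move involving one classical crossing) -/
  mixed : D → D → Prop
  /-- first forbidden move (the welded move, overpass slide) -/
  forbidden : D → D → Prop
  isotopy_spec : ∀ a b, isotopy a b →
    vcross b = vcross a ∧ ccross b = ccross a ∧ whitney b = whitney a
  r1_spec : ∀ a b, r1 a b →
    vcross b = vcross a ∧
    ((ccross b : ℤ) - ccross a = 1 ∨ (ccross b : ℤ) - ccross a = -1) ∧
    (whitney b - whitney a = 1 ∨ whitney b - whitney a = -1)
  r2_spec : ∀ a b, r2 a b →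
    vcross b = vcross a ∧
    ((ccross b : ℤ) - ccross a = 2 ∨ (ccross b : ℤ) - ccross a = -2) ∧
    whitney b = whitney a
  r3_spec : ∀ a b, r3 a b →
    vcross b = vcross a ∧ ccross b = ccross a ∧ whitney b = whitney a
  vr1_spec : ∀ a b, vr1 a b →
    ccross b = ccross a ∧
    ((vcross b : ℤ) - vcross a = 1 ∨ (vcross b : ℤ) - vcross a = -1) ∧
    (whitney b - whitney a = 1 ∨ whitney b - whitney a = -1)
  vr2_spec : ∀ a b, vr2 a b →
    ccross b = ccross a ∧
    ((vcross b : ℤ) - vcross a = 2 ∨ (vcross b : ℤ) - vcross a = -2) ∧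
    whitney b = whitney a
  vr3_spec : ∀ a b, vr3 a b →
    vcross b = vcross a ∧ ccross b = ccross a ∧ whitney b = whitney a
  mixed_spec : ∀ a b, mixed a b →
    vcross b = vcross a ∧ ccross b = ccross a ∧ whitney b = whitney a
  forbidden_spec : ∀ a b, forbidden a b →
    vcross b = vcross a ∧ ccross b = ccross a ∧ whitney b = whitney a

namespace VirtualDiagramMoves

variable {D : Type*} (M : VirtualDiagramMoves D)

/-- A single rotational welded move: any generating move except virtual Reidemeister I. -/
def RotationalWeldedMove (a b : D) : Prop :=
  M.isotopy a b ∨ M.r1 a b ∨ M.r2 a b ∨ M.r3 a b ∨ M.vr2 a b ∨ M.vr3 a b ∨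
    M.mixed a b ∨ M.forbidden a b

/-- Rotational welded equivalence: the equivalence relation generated by all moves except
virtual Reidemeister I. -/
def RotationalWeldedEquiv (a b : D) : Prop :=
  Relation.EqvGen M.RotationalWeldedMove a b

/-- A single welded move: any generating move, including virtual Reidemeister I. -/
def WeldedMove (a b : D) : Prop :=
  M.RotationalWeldedMove a b ∨ M.vr1 a b

/-- Welded equivalence: the equivalence relation generated by all the moves. -/
def WeldedEquiv (a b : D) : Prop :=
  Relation.EqvGen M.WeldedMove a b

end VirtualDiagramMoves

/-! Statement 10: rotational welded equivalence preserves the parity of the number of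
virtual crossing points. -/

theorem stmt10 {D : Type*} (M : VirtualDiagramMoves D) (α β : D)
    (h : M.RotationalWeldedEquiv α β) :
    M.vcross α % 2 = M.vcross β % 2 := by
  induction h with
  | rel a b hab =>
    rcases hab with h|h|h|h|h|h|h|h
    · rw [(M.isotopy_spec a b h).1]
    · rw [(M.r1_spec a b h).1]
    · rw [(M.r2_spec a b h).1]
    · rw [(M.r3_spec a b h).1]
    · rcases (M.vr2_spec a b h).2.1 with h2|h2 <;> omega
    · rw [(M.vr3_spec a b h).1]
    · rw [(M.mixed_spec a b h).1]
    · rw [(M.forbidden_spec a b h).1]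
  | refl a => rfl
  | symm a b _ ih => exact ih.symm
  | trans a b c _ _ ih1 ih2 => exact ih1.trans ih2
end

section
/- If two virtual 1-knot diagrams α and β are rotational welded equivalent (equivalently, fiberwise equivalent), then α and β have the same parity of classical crossings if and only if they have the same parity of Whitney degree. -/
/-! Statement 12: if α and β are rotational welded equivalent, then α and β have the same
parity of classical crossings iff they have the same parity of Whitney degree. -/

private lemma move_key {D : Type*} (M : VirtualDiagramMoves D) {a b : D}
    (h : M.RotationalWeldedMove a b) :
    ((M.ccross b : ℤ) + M.whitney b) % 2 = ((M.ccross a : ℤ) + M.whitney a) % 2 := by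
  rcases h with h | h | h | h | h | h | h | h
  · obtain ⟨_, h2, h3⟩ := M.isotopy_spec a b h; rw [h2, h3]
  · obtain ⟨_, h2, h3⟩ := M.r1_spec a b h; omega
  · obtain ⟨_, h2, h3⟩ := M.r2_spec a b h; omega
  · obtain ⟨_, h2, h3⟩ := M.r3_spec a b h; rw [h2, h3]
  · obtain ⟨h1, _, h3⟩ := M.vr2_spec a b h; rw [h1, h3]
  · obtain ⟨_, h2, h3⟩ := M.vr3_spec a b h; rw [h2, h3]
  · obtain ⟨_, h2, h3⟩ := M.mixed_spec a b h; rw [h2, h3]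
  · obtain ⟨_, h2, h3⟩ := M.forbidden_spec a b h; rw [h2, h3]

private lemma equiv_key {D : Type*} (M : VirtualDiagramMoves D) {a b : D}
    (h : M.RotationalWeldedEquiv a b) :
    ((M.ccross b : ℤ) + M.whitney b) % 2 = ((M.ccross a : ℤ) + M.whitney a) % 2 := by
  induction h with
  | rel x y hxy => exact move_key M hxy
  | refl x => rfl
  | symm x y _ ih => exact ih.symm
  | trans x y z _ _ ih1 ih2 => exact ih2.trans ih1

theorem stmt12 {D : Type*} (M : VirtualDiagramMoves D) (α β : D)
    (h : M.RotationalWeldedEquiv α β) :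
    (M.ccross α % 2 = M.ccross β % 2 ↔ M.whitney α % 2 = M.whitney β % 2) := by
  have := equiv_key M h
  omega
end

section
/- If two virtual 1-knot diagrams α and β are welded equivalent, then α and β have the same parity of the total number of crossings (classical plus virtual) if and only if they have the same parity of Whitney degree. -/
/-! Statement 13: if α and β are welded equivalent, then α and β have the same parity of
the total number of crossings (classical plus virtual) iff they have the same parity of
Whitney degree. -/

private lemma stmt13_key {D : Type*} (M : VirtualDiagramMoves D) (a b : D)
    (h : M.WeldedMove a b) :
    ((M.ccross b + M.vcross b : ℤ) + M.whitney b) % 2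
      = ((M.ccross a + M.vcross a : ℤ) + M.whitney a) % 2 := by
  rcases h with (h|h|h|h|h|h|h|h) | h
  · obtain ⟨h1, h2, h3⟩ := M.isotopy_spec a b h; rw [h1, h2, h3]
  · obtain ⟨h1, h2, h3⟩ := M.r1_spec a b h; rw [h1]; omega
  · obtain ⟨h1, h2, h3⟩ := M.r2_spec a b h; rw [h1, h3]; omega
  · obtain ⟨h1, h2, h3⟩ := M.r3_spec a b h; rw [h1, h2, h3]
  · obtain ⟨h1, h2, h3⟩ := M.vr2_spec a b h; rw [h1, h3]; omega
  · obtain ⟨h1, h2, h3⟩ := M.vr3_spec a b h; rw [h1, h2, h3]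
  · obtain ⟨h1, h2, h3⟩ := M.mixed_spec a b h; rw [h1, h2, h3]
  · obtain ⟨h1, h2, h3⟩ := M.forbidden_spec a b h; rw [h1, h2, h3]
  · obtain ⟨h1, h2, h3⟩ := M.vr1_spec a b h; rw [h1]; omega

theorem stmt13 {D : Type*} (M : VirtualDiagramMoves D) (α β : D)
    (h : M.WeldedEquiv α β) :
    ((M.ccross α + M.vcross α) % 2 = (M.ccross β + M.vcross β) % 2 ↔
      M.whitney α % 2 = M.whitney β % 2) := by
  have key : ((M.ccross α + M.vcross α : ℤ) + M.whitney α) % 2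
      = ((M.ccross β + M.vcross β : ℤ) + M.whitney β) % 2 := by
    induction h with
    | rel a b hab => exact (stmt13_key M a b hab).symm
    | refl a => rfl
    | symm a b _ ih => exact ih.symm
    | trans a b c _ _ ih1 ih2 => exact ih1.trans ih2
  omega
end
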